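/- The function x ↦ x(x+1)·(ln(1 + 1/x))² is strictly increasing on (0,∞) and converges to 1 as x → ∞. -/

import Mathlib

/-!
Writing `L x = log (1 + 1 / x)`, the derivative of `x (x + 1) L(x)²` is `L(x) ((2x + 1) L(x) - 2)`.
It is positive because `2 / (2x + 1)` is the first term of the positive series
`log (1 + 1/x) = ∑ₖ 2 / ((2k + 1) (2x + 1)^(2k+1))`.
For the limit, `x (x + 1) L(x)² = (1 + 1/x) (x L(x))²` and `x L(x) → 1`.
-/

open Real Filter Set Topology

namespace Real

theorem two_div_two_mul_add_one_lt_log_one_add_inv {a : ℝ} (ha : 0 < a) :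
    2 / (2 * a + 1) < log (1 + a⁻¹) := by
  have hsum := hasSum_log_one_add_inv ha
  have htail := sum_le_hasSum (Finset.range 2) (fun k _ => by positivity) hsum
  norm_num [Finset.sum_range_succ] at htail
  have hsecond : 0 < ((2 * a + 1) ^ 3)⁻¹ := by positivity
  rw [div_eq_mul_inv]
  linarith

theorem hasDerivAt_log_one_add_one_div {x : ℝ} (hx : x ≠ 0) (hx₁ : x + 1 ≠ 0) :
    HasDerivAt (fun x => log (1 + 1 / x)) (-(1 / (x * (x + 1)))) x := by
  have hbase : 1 + 1 / x ≠ 0 := by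
    rw [one_add_div hx]
    exact div_ne_zero hx₁ hx
  have hinner : HasDerivAt (fun y : ℝ => 1 + 1 / y) (-(x ^ 2)⁻¹) x := by
    simpa only [one_div] using (hasDerivAt_inv hx).const_add 1
  exact (hinner.log hbase).congr_deriv (by field_simp)

end Real

theorem hasDerivAt_mul_add_one_mul_log_one_add_one_div_sq {x : ℝ} (hx : x ≠ 0)
    (hx₁ : x + 1 ≠ 0) :
    HasDerivAt (fun x => x * (x + 1) * log (1 + 1 / x) ^ 2)
      (log (1 + 1 / x) * ((2 * x + 1) * log (1 + 1 / x) - 2)) x := by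
  refine (((hasDerivAt_id' x).fun_mul ((hasDerivAt_id' x).add_const 1)).fun_mul
    ((hasDerivAt_log_one_add_one_div hx hx₁).fun_pow 2)).congr_deriv ?_
  field_simp
  ring

theorem strictMonoOn_mul_add_one_mul_log_one_add_one_div_sq :
    StrictMonoOn (fun x : ℝ => x * (x + 1) * log (1 + 1 / x) ^ 2) (Ioi 0) := by
  have hderiv {x : ℝ} (hx : 0 < x) := hasDerivAt_mul_add_one_mul_log_one_add_one_div_sq
    hx.ne' (by positivity)
  refine strictMonoOn_of_deriv_pos (convex_Ioi 0)
    (fun x hx => (hderiv hx).continuousAt.continuousWithinAt) fun x hx => ?_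
  rw [interior_Ioi] at hx
  have hx : 0 < x := hx
  have hlog : 0 < log (1 + 1 / x) := log_pos (by simpa using hx)
  have hkey : 2 / (2 * x + 1) < log (1 + 1 / x) := by
    simpa [one_div] using two_div_two_mul_add_one_lt_log_one_add_inv hx
  rw [div_lt_iff₀' (by positivity)] at hkey
  rw [(hderiv hx).deriv]
  exact mul_pos hlog (by linarith)

theorem tendsto_mul_add_one_mul_log_one_add_one_div_sq_atTop :
    Tendsto (fun x : ℝ => x * (x + 1) * log (1 + 1 / x) ^ 2) atTop (𝓝 1) := by
  have hmul : Tendsto (fun x : ℝ => x * log (1 + 1 / x)) atTop (𝓝 1) :=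
    tendsto_mul_log_one_add_div_atTop 1
  have hbase : Tendsto (fun x : ℝ => 1 + 1 / x) atTop (𝓝 1) := by
    simpa only [one_div, add_zero] using tendsto_inv_atTop_zero.const_add (1 : ℝ)
  have hprod : Tendsto (fun x : ℝ => (1 + 1 / x) * (x * log (1 + 1 / x)) ^ 2) atTop (𝓝 1) := by
    simpa using hbase.mul (hmul.pow 2)
  refine hprod.congr' ?_
  filter_upwards [eventually_ne_atTop 0] with x hx
  field_simp

theorem variance_building_block :
    StrictMonoOn (fun x : ℝ => x * (x + 1) * (Real.log (1 + 1 / x)) ^ 2)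
      (Set.Ioi (0 : ℝ)) ∧
    Filter.Tendsto (fun x : ℝ => x * (x + 1) * (Real.log (1 + 1 / x)) ^ 2)
      Filter.atTop (nhds 1) :=
  ⟨strictMonoOn_mul_add_one_mul_log_one_add_one_div_sq,
    tendsto_mul_add_one_mul_log_one_add_one_div_sq_atTop⟩
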